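/- For the root system D_n = {±ε_i ± ε_j : 1 ≤ i < j ≤ n} in ℝ^n (n ≥ 2), there exists a choice of one root from each antipodal pair whose sum is the zero vector if and only if n ≡ 0 or 1 (mod 4). -/
import Mathlib


/-- The root system `D_n` in `ℝ^n`: vectors `±ε_i ± ε_j` for `i < j`. -/
def rootsD (n : ℕ) : Set (Fin n → ℝ) :=
  {v | ∃ i j : Fin n, i < j ∧
    (v = Pi.single i 1 + Pi.single j 1 ∨ v = Pi.single i 1 - Pi.single j 1 ∨
     v = -(Pi.single i 1 + Pi.single j 1) ∨ v = -(Pi.single i 1 - Pi.single j 1))}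

open Finset

/-- sign table for edges within a block of 4 -/
def tbl (p q : ℕ) : ℝ × ℝ :=
  if p = 0 ∧ q = 1 then (-1, -1)
  else if p = 0 ∧ q = 2 then (-1, 1)
  else if p = 1 ∧ q = 2 then (-1, -1)
  else (1, 1)

/-- sign choice ignoring the special last vertex -/
noncomputable def ab0 (i j : ℕ) : ℝ × ℝ :=
  if i / 4 < j / 4 then (if j % 2 = 0 then (1, 1) else (-1, -1))
  else tbl (i % 4) (j % 4)

/-- signs `(a,b)` for the roots `a(ε_i+ε_j)`, `b(ε_i-ε_j)` chosen for edge `i<j`. -/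
noncomputable def ab (n i j : ℕ) : ℝ × ℝ :=
  if n % 4 = 1 ∧ j = n - 1 then (if i % 2 = 0 then (1, -1) else (-1, 1))
  else ab0 i j

noncomputable def ca (n i j : ℕ) : ℝ := (ab n i j).1 + (ab n i j).2
noncomputable def cb (n i j : ℕ) : ℝ := (ab n i j).1 - (ab n i j).2

lemma ab_fst (n i j : ℕ) : (ab n i j).1 = 1 ∨ (ab n i j).1 = -1 := by
  unfold ab ab0 tbl; split_ifs <;> simp

lemma ab_snd (n i j : ℕ) : (ab n i j).2 = 1 ∨ (ab n i j).2 = -1 := by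
  unfold ab ab0 tbl; split_ifs <;> simp

/-- the basic vector `s ε_i + t ε_j` -/
noncomputable def sv {n : ℕ} (i j : Fin n) (s t : ℝ) : Fin n → ℝ :=
  s • (Pi.single i 1 : Fin n → ℝ) + t • (Pi.single j 1 : Fin n → ℝ)

lemma sv_apply {n : ℕ} (i j k : Fin n) (s t : ℝ) :
    sv i j s t k = (if k = i then s else 0) + (if k = j then t else 0) := by
  simp [sv, Pi.single_apply, mul_ite, mul_one, mul_zero]

lemma sv_neg {n : ℕ} (i j : Fin n) (s t : ℝ) : -sv i j s t = sv i j (-s) (-t) := by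
  simp [sv, neg_add, neg_smul]
  exact add_comm _ _

lemma sv_one_one {n : ℕ} (i j : Fin n) :
    Pi.single i (1:ℝ) + Pi.single j 1 = sv i j 1 1 := by simp [sv]

lemma sv_one_negone {n : ℕ} (i j : Fin n) :
    Pi.single i (1:ℝ) - Pi.single j 1 = sv i j 1 (-1) := by
  simp [sv, sub_eq_add_neg]

lemma sv_inj {n : ℕ} {i j i' j' : Fin n} {s t s' t' : ℝ} (hij : i < j) (hij' : i' < j')
    (hs : s ≠ 0) (ht : t ≠ 0) (hs' : s' ≠ 0) (ht' : t' ≠ 0)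
    (h : sv i j s t = sv i' j' s' t') : i = i' ∧ j = j' ∧ s = s' ∧ t = t' := by
  have H : ∀ k, (if k = i then s else 0) + (if k = j then t else 0)
      = (if k = i' then s' else 0) + (if k = j' then t' else 0) := by
    intro k; have := congrFun h k; simpa [sv_apply] using this
  have hne : i ≠ j := ne_of_lt hij
  have hne' : i' ≠ j' := ne_of_lt hij'
  have d1 : i = i' ∨ i = j' := by
    by_contra hx
    push_neg at hx
    have := H i
    rw [if_pos rfl, if_neg hne, if_neg hx.1, if_neg hx.2] at this
    simp at this; exact hs this
  have d2 : j = i' ∨ j = j' := by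
    by_contra hx
    push_neg at hx
    have := H j
    rw [if_neg (ne_of_lt hij).symm, if_pos rfl, if_neg hx.1, if_neg hx.2] at this
    simp at this; exact ht this
  have d3 : i' = i ∨ i' = j := by
    by_contra hx
    push_neg at hx
    have := H i'
    rw [if_neg hx.1, if_neg hx.2, if_pos rfl, if_neg hne'] at this
    simp at this; exact hs' this.symm
  have d4 : j' = i ∨ j' = j := by
    by_contra hx
    push_neg at hx
    have := H j'
    rw [if_neg hx.1, if_neg hx.2, if_neg (ne_of_lt hij').symm, if_pos rfl] at this
    simp at this; exact ht' this.symm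
  have hii : i = i' := by
    rcases d1 with h1 | h1
    · exact h1
    · rcases d3 with h3 | h3
      · exact h3.symm
      · exfalso
        have : (i:ℕ) < j ∧ (i':ℕ) < j' ∧ (i:ℕ) = j' ∧ (i':ℕ) = j := by
          exact ⟨hij, hij', congrArg Fin.val h1, congrArg Fin.val h3⟩
        omega
  have hjj : j = j' := by
    rcases d2 with h2 | h2
    · exfalso
      have : (i:ℕ) < j ∧ (i:ℕ) = i' ∧ (j:ℕ) = i' := ⟨hij, congrArg Fin.val hii, congrArg Fin.val h2⟩
      omega
    · exact h2
  refine ⟨hii, hjj, ?_, ?_⟩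
  · have := H i
    rw [if_pos rfl, if_neg hne, if_pos hii, if_neg (hjj ▸ hne)] at this
    simpa using this
  · have := H j
    rw [if_neg (ne_of_lt hij).symm, if_pos rfl, if_neg (by rw [← hii]; exact (ne_of_lt hij).symm), if_pos hjj] at this
    simpa using this

lemma alt_sum (a d : ℕ) :
    ∑ j ∈ Finset.Ico a (a + 2 * d), (if j % 2 = 0 then (2:ℝ) else -2) = 0 := by
  induction d with
  | zero => simp
  | succ d ih =>
    have h1 : a + 2 * (d + 1) = (a + 2 * d + 1) + 1 := by ring
    rw [h1, Finset.sum_Ico_succ_top (by omega), Finset.sum_Ico_succ_top (by omega), ih]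
    rcases Nat.even_or_odd (a + 2 * d) with h | h
    · have e1 : (a + 2 * d) % 2 = 0 := Nat.even_iff.mp h
      have e2 : (a + 2 * d + 1) % 2 = 1 := by omega
      rw [e1, e2]; norm_num
    · have e1 : (a + 2 * d) % 2 = 1 := Nat.odd_iff.mp h
      have e2 : (a + 2 * d + 1) % 2 = 0 := by omega
      rw [e1, e2]; norm_num

noncomputable def ca0 (i j : ℕ) : ℝ := (ab0 i j).1 + (ab0 i j).2
noncomputable def cb0 (i j : ℕ) : ℝ := (ab0 i j).1 - (ab0 i j).2

lemma ab0_same (B p q : ℕ) (hB : B % 4 = 0) (hp : p < 4) (hq : q < 4) :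
    ab0 (B + p) (B + q) = tbl p q := by
  have h1 : (B + p) % 4 = p := by omega
  have h2 : (B + q) % 4 = q := by omega
  unfold ab0
  rw [if_neg (by omega), h1, h2]

lemma ab0_cross (i j : ℕ) (h : i / 4 < j / 4) :
    ab0 i j = if j % 2 = 0 then (1, 1) else (-1, -1) := by
  unfold ab0; rw [if_pos h]

lemma ca0_cross (i j : ℕ) (h : i / 4 < j / 4) :
    ca0 i j = if j % 2 = 0 then (2:ℝ) else -2 := by
  unfold ca0; rw [ab0_cross i j h]; split_ifs <;> norm_num

lemma cb0_cross (i j : ℕ) (h : i / 4 < j / 4) : cb0 i j = 0 := by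
  unfold cb0; rw [ab0_cross i j h]; split_ifs <;> norm_num

lemma core (N : ℕ) (hN : N % 4 = 0) (k : ℕ) (hk : k < N) :
    ∑ j ∈ Finset.Ico (k+1) N, ca0 k j + ∑ i ∈ Finset.range k, cb0 i k = 0 := by
  set B := 4 * (k / 4) with hB
  have hBmod : B % 4 = 0 := by omega
  have hkB : B ≤ k ∧ k < B + 4 := by constructor <;> omega
  have hB4 : B + 4 ≤ N := by omega
  -- split the first sum
  rw [← Finset.sum_Ico_consecutive _ (show k+1 ≤ B+4 by omega) hB4]
  -- the cross part of the first sum vanishes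
  have hcross1 : ∑ j ∈ Finset.Ico (B+4) N, ca0 k j = 0 := by
    have : ∀ j ∈ Finset.Ico (B+4) N, ca0 k j = (if j % 2 = 0 then (2:ℝ) else -2) := by
      intro j hj
      rw [Finset.mem_Ico] at hj
      exact ca0_cross k j (by omega)
    rw [Finset.sum_congr rfl this]
    obtain ⟨d, hd⟩ : ∃ d, N = (B+4) + 2 * d := ⟨(N - (B+4))/2, by omega⟩
    rw [hd]; exact alt_sum _ _
  -- split the second sum
  rw [Finset.range_eq_Ico, ← Finset.sum_Ico_consecutive _ (show 0 ≤ B by omega) (show B ≤ k by omega)]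
  have hcross2 : ∑ i ∈ Finset.Ico 0 B, cb0 i k = 0 := by
    apply Finset.sum_eq_zero
    intro i hi
    rw [Finset.mem_Ico] at hi
    exact cb0_cross i k (by omega)
  rw [hcross1, hcross2, add_zero, zero_add]
  -- now the block-local parts
  have hp4 : k % 4 = 0 ∨ k % 4 = 1 ∨ k % 4 = 2 ∨ k % 4 = 3 := by omega
  have hkeq : k = B + k % 4 := by omega
  rcases hp4 with hp | hp | hp | hp
  · -- k = B
    have hk0 : k = B := by omega
    have e1 : Finset.Ico (k+1) (B+4) = {B+1, B+2, B+3} := by ext x; simp; omega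
    have e2 : Finset.Ico B k = (∅ : Finset ℕ) := by rw [hk0]; simp
    rw [e1, e2, Finset.sum_insert (by simp), Finset.sum_insert (by simp), Finset.sum_singleton,
      Finset.sum_empty]
    have v1 : ca0 k (B+1) = -2 := by
      unfold ca0; rw [hk0, show B = B + 0 from rfl, ab0_same B 0 1 hBmod (by omega) (by omega)]
      norm_num [tbl]
    have v2 : ca0 k (B+2) = 0 := by
      unfold ca0; rw [hk0, show B = B + 0 from rfl, ab0_same B 0 2 hBmod (by omega) (by omega)]
      norm_num [tbl]
    have v3 : ca0 k (B+3) = 2 := by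
      unfold ca0; rw [hk0, show B = B + 0 from rfl, ab0_same B 0 3 hBmod (by omega) (by omega)]
      norm_num [tbl]
    rw [v1, v2, v3]; ring
  · -- k = B+1
    have hk0 : k = B + 1 := by omega
    have e1 : Finset.Ico (k+1) (B+4) = {B+2, B+3} := by ext x; simp; omega
    have e2 : Finset.Ico B k = {B} := by ext x; simp; omega
    rw [e1, e2, Finset.sum_insert (by simp), Finset.sum_singleton, Finset.sum_singleton]
    have v1 : ca0 k (B+2) = -2 := by
      unfold ca0; rw [hk0, ab0_same B 1 2 hBmod (by omega) (by omega)]; norm_num [tbl]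
    have v2 : ca0 k (B+3) = 2 := by
      unfold ca0; rw [hk0, ab0_same B 1 3 hBmod (by omega) (by omega)]; norm_num [tbl]
    have v3 : cb0 B k = 0 := by
      unfold cb0; rw [hk0, show B = B + 0 from rfl, ab0_same B 0 1 hBmod (by omega) (by omega)]
      norm_num [tbl]
    rw [v1, v2, v3]; ring
  · -- k = B+2
    have hk0 : k = B + 2 := by omega
    have e1 : Finset.Ico (k+1) (B+4) = {B+3} := by ext x; simp; omega
    have e2 : Finset.Ico B k = {B, B+1} := by ext x; simp; omega
    rw [e1, e2, Finset.sum_insert (by simp), Finset.sum_singleton, Finset.sum_singleton]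
    have v1 : ca0 k (B+3) = 2 := by
      unfold ca0; rw [hk0, ab0_same B 2 3 hBmod (by omega) (by omega)]; norm_num [tbl]
    have v2 : cb0 B k = -2 := by
      unfold cb0; rw [hk0, show B = B + 0 from rfl, ab0_same B 0 2 hBmod (by omega) (by omega)]
      norm_num [tbl]
    have v3 : cb0 (B+1) k = 0 := by
      unfold cb0; rw [hk0, ab0_same B 1 2 hBmod (by omega) (by omega)]; norm_num [tbl]
    rw [v1, v2, v3]; ring
  · -- k = B+3
    have hk0 : k = B + 3 := by omega
    have e1 : Finset.Ico (k+1) (B+4) = (∅ : Finset ℕ) := by ext x; simp; omega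
    have e2 : Finset.Ico B k = {B, B+1, B+2} := by ext x; simp; omega
    rw [e1, e2, Finset.sum_empty, Finset.sum_insert (by simp), Finset.sum_insert (by simp),
      Finset.sum_singleton]
    have v1 : cb0 B k = 0 := by
      unfold cb0; rw [hk0, show B = B + 0 from rfl, ab0_same B 0 3 hBmod (by omega) (by omega)]
      norm_num [tbl]
    have v2 : cb0 (B+1) k = 0 := by
      unfold cb0; rw [hk0, ab0_same B 1 3 hBmod (by omega) (by omega)]; norm_num [tbl]
    have v3 : cb0 (B+2) k = 0 := by
      unfold cb0; rw [hk0, ab0_same B 2 3 hBmod (by omega) (by omega)]; norm_num [tbl]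
    rw [v1, v2, v3]; ring

lemma ab_eq_ab0 (n i j : ℕ) (h : ¬ (n % 4 = 1 ∧ j = n - 1)) : ab n i j = ab0 i j := by
  unfold ab; rw [if_neg h]

lemma ab_special (n i : ℕ) (h1 : n % 4 = 1) :
    ab n i (n-1) = (if i % 2 = 0 then ((1:ℝ), (-1:ℝ)) else (-1, 1)) := by
  unfold ab; rw [if_pos ⟨h1, rfl⟩]

lemma main_sum (n : ℕ) (h4 : n % 4 = 0 ∨ n % 4 = 1) (K : ℕ) (hK : K < n) :
    ∑ j ∈ Finset.Ico (K+1) n, ca n K j + ∑ i ∈ Finset.range K, cb n i K = 0 := by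
  rcases h4 with h4 | h4
  · have e1 : ∀ j ∈ Finset.Ico (K+1) n, ca n K j = ca0 K j := by
      intro j hj; unfold ca ca0; rw [ab_eq_ab0 n K j (by omega)]
    have e2 : ∀ i ∈ Finset.range K, cb n i K = cb0 i K := by
      intro i hi; unfold cb cb0; rw [ab_eq_ab0 n i K (by simp at hi; omega)]
    rw [Finset.sum_congr rfl e1, Finset.sum_congr rfl e2]
    exact core n h4 K hK
  · by_cases hKtop : K = n - 1
    · have e0 : Finset.Ico (K+1) n = ∅ := by ext x; simp; omega
      rw [e0, Finset.sum_empty, zero_add]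
      have e2 : ∀ i ∈ Finset.range K, cb n i K = (if i % 2 = 0 then (2:ℝ) else -2) := by
        intro i hi; unfold cb
        rw [hKtop, ab_special n i h4]
        split_ifs <;> norm_num
      rw [Finset.sum_congr rfl e2]
      obtain ⟨d, hd⟩ : ∃ d, K = 0 + 2 * d := ⟨K / 2, by omega⟩
      rw [Finset.range_eq_Ico, hd]
      exact alt_sum 0 d
    · have hKN : K < n - 1 := by omega
      have hsplit : Finset.Ico (K+1) n = insert (n-1) (Finset.Ico (K+1) (n-1)) := by
        ext x; simp; omega
      rw [hsplit, Finset.sum_insert (by simp)]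
      have etop : ca n K (n-1) = 0 := by
        unfold ca; rw [ab_special n K h4]; split_ifs <;> norm_num
      have e1 : ∀ j ∈ Finset.Ico (K+1) (n-1), ca n K j = ca0 K j := by
        intro j hj; simp at hj; unfold ca ca0; rw [ab_eq_ab0 n K j (by omega)]
      have e2 : ∀ i ∈ Finset.range K, cb n i K = cb0 i K := by
        intro i hi; unfold cb cb0; rw [ab_eq_ab0 n i K (by omega)]
      rw [etop, Finset.sum_congr rfl e1, Finset.sum_congr rfl e2, zero_add]
      exact core (n-1) (by omega) K hKN

lemma reduce (n K : ℕ) (hK : K < n) :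
    ∑ i ∈ Finset.range n, ∑ j ∈ Finset.range n,
      (if i < j then ((if K = i then ca n i j else 0) + (if K = j then cb n i j else 0)) else 0)
    = ∑ j ∈ Finset.Ico (K+1) n, ca n K j + ∑ i ∈ Finset.range K, cb n i K := by
  have step1 : ∀ i j : ℕ,
      (if i < j then ((if K = i then ca n i j else 0) + (if K = j then cb n i j else 0)) else 0)
      = (if K = i then (if i < j then ca n i j else 0) else 0)
        + (if K = j then (if i < j then cb n i j else 0) else 0) := by
    intro i j; split_ifs <;> ring
  simp only [step1]
  rw [Finset.sum_congr rfl (fun i _ => Finset.sum_add_distrib), Finset.sum_add_distrib]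
  congr 1
  · have : ∀ i ∈ Finset.range n,
        ∑ j ∈ Finset.range n, (if K = i then (if i < j then ca n i j else 0) else 0)
        = (if K = i then ∑ j ∈ Finset.range n, (if i < j then ca n i j else 0) else 0) := by
      intro i _; by_cases h : K = i <;> simp [h]
    rw [Finset.sum_congr rfl this, Finset.sum_ite_eq, if_pos (Finset.mem_range.mpr hK),
      ← Finset.sum_filter]
    congr 1
    ext x; simp; omega
  · rw [Finset.sum_comm]
    have : ∀ j ∈ Finset.range n,
        ∑ i ∈ Finset.range n, (if K = j then (if i < j then cb n i j else 0) else 0)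
        = (if K = j then ∑ i ∈ Finset.range n, (if i < j then cb n i j else 0) else 0) := by
      intro j _; by_cases h : K = j <;> simp [h]
    rw [Finset.sum_congr rfl this, Finset.sum_ite_eq, if_pos (Finset.mem_range.mpr hK),
      ← Finset.sum_filter]
    congr 1
    ext x; simp; omega

open scoped Classical

lemma ab_fst_ne (n i j : ℕ) : (ab n i j).1 ≠ 0 := by
  rcases ab_fst n i j with h | h <;> rw [h] <;> norm_num

lemma ab_snd_ne (n i j : ℕ) : (ab n i j).2 ≠ 0 := by
  rcases ab_snd n i j with h | h <;> rw [h] <;> norm_num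

noncomputable def F (n : ℕ) : Fin n × Fin n × Bool → (Fin n → ℝ)
  | (i, j, true) => sv i j (ab n ↑i ↑j).1 (ab n ↑i ↑j).1
  | (i, j, false) => sv i j (ab n ↑i ↑j).2 (-(ab n ↑i ↑j).2)

def E (n : ℕ) : Finset (Fin n × Fin n × Bool) :=
  Finset.univ.filter (fun x => x.1 < x.2.1)

lemma F_injOn (n : ℕ) : ∀ x ∈ E n, ∀ y ∈ E n, F n x = F n y → x = y := by
  rintro ⟨i, j, t⟩ hx ⟨i', j', t'⟩ hy heq
  have hij : i < j := by simpa [E] using hx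
  have hij' : i' < j' := by simpa [E] using hy
  cases t <;> cases t' <;> simp only [F] at heq
  · obtain ⟨h1, h2, h3, h4⟩ := sv_inj hij hij' (ab_snd_ne _ _ _) (neg_ne_zero.mpr (ab_snd_ne _ _ _))
      (ab_snd_ne _ _ _) (neg_ne_zero.mpr (ab_snd_ne _ _ _)) heq
    simp [h1, h2]
  · obtain ⟨h1, h2, h3, h4⟩ := sv_inj hij hij' (ab_snd_ne _ _ _) (neg_ne_zero.mpr (ab_snd_ne _ _ _))
      (ab_fst_ne _ _ _) (ab_fst_ne _ _ _) heq
    exfalso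
    subst h1; subst h2
    have := ab_snd_ne n ↑i ↑j
    rw [h3] at h4
    rw [neg_eq_iff_eq_neg] at h4
    · exact this (by linarith [h4])
  · obtain ⟨h1, h2, h3, h4⟩ := sv_inj hij hij' (ab_fst_ne _ _ _) (ab_fst_ne _ _ _)
      (ab_snd_ne _ _ _) (neg_ne_zero.mpr (ab_snd_ne _ _ _)) heq
    exfalso
    subst h1; subst h2
    have := ab_fst_ne n ↑i ↑j
    rw [← h3] at h4
    exact this (by linarith [h4])
  · obtain ⟨h1, h2, h3, h4⟩ := sv_inj hij hij' (ab_fst_ne _ _ _) (ab_fst_ne _ _ _)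
      (ab_fst_ne _ _ _) (ab_fst_ne _ _ _) heq
    simp [h1, h2]

lemma F_mem_roots (n : ℕ) : ∀ x ∈ E n, F n x ∈ rootsD n := by
  rintro ⟨i, j, t⟩ hx
  have hij : i < j := by simpa [E] using hx
  refine ⟨i, j, hij, ?_⟩
  cases t
  · simp only [F]
    rcases ab_snd n ↑i ↑j with h | h <;> rw [h]
    · right; left
      rw [sv_one_negone]
    · right; right; right
      rw [sv_one_negone, sv_neg]
  · simp only [F]
    rcases ab_fst n ↑i ↑j with h | h <;> rw [h]
    · left; rw [sv_one_one]
    · right; right; left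
      rw [sv_one_one, sv_neg]

lemma sum_F (n : ℕ) (h4 : n % 4 = 0 ∨ n % 4 = 1) : ∑ x ∈ E n, F n x = 0 := by
  funext k
  rw [Finset.sum_apply]
  show _ = (0:ℝ)
  rw [E, Finset.sum_filter, Fintype.sum_prod_type]
  have key : ∀ i : Fin n,
      (∑ y : Fin n × Bool, if (i, y).1 < (i, y).2.1 then F n (i, y) k else 0)
      = ∑ j' ∈ Finset.range n,
          (if (i:ℕ) < j' then ((if (k:ℕ) = (i:ℕ) then ca n ↑i j' else 0)
            + (if (k:ℕ) = j' then cb n ↑i j' else 0)) else 0) := by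
    intro i
    rw [Fintype.sum_prod_type]
    rw [← Fin.sum_univ_eq_sum_range (fun j' => (if (i:ℕ) < j' then ((if (k:ℕ) = (i:ℕ) then ca n ↑i j' else 0)
            + (if (k:ℕ) = j' then cb n ↑i j' else 0)) else 0)) n]
    apply Finset.sum_congr rfl
    intro j' _
    rw [Fintype.sum_bool]
    by_cases h : i < j'
    · rw [if_pos h, if_pos h, if_pos (Fin.lt_def.mp h)]
      simp only [F, sv_apply, ca, cb, Fin.ext_iff]
      have hne : ¬ ((i:ℕ) = (j':ℕ)) := by have := Fin.lt_def.mp h; omega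
      have hne' : ¬ ((j':ℕ) = (i:ℕ)) := fun hc => hne hc.symm
      by_cases h1 : (k:ℕ) = (i:ℕ) <;> by_cases h2 : (k:ℕ) = (j':ℕ) <;>
        simp [h1, h2, hne, hne'] <;> ring
    · rw [if_neg h, if_neg h, if_neg (fun hc => h (Fin.lt_def.mpr hc))]
      norm_num
  rw [Finset.sum_congr rfl (fun i _ => key i)]
  rw [Fin.sum_univ_eq_sum_range (fun i => ∑ j' ∈ Finset.range n,
          (if i < j' then ((if (k:ℕ) = i then ca n i j' else 0)
            + (if (k:ℕ) = j' then cb n i j' else 0)) else 0)) n]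
  rw [reduce n (k:ℕ) k.isLt]
  exact main_sum n h4 (k:ℕ) k.isLt

lemma mem_S_iff (n : ℕ) (i j : Fin n) (hij : i < j) (s t : ℝ) (hs : s ≠ 0) (ht : t ≠ 0) :
    sv i j s t ∈ (E n).image (F n) ↔
      ((s = (ab n ↑i ↑j).1 ∧ t = (ab n ↑i ↑j).1) ∨
       (s = (ab n ↑i ↑j).2 ∧ t = -(ab n ↑i ↑j).2)) := by
  constructor
  · intro h
    rw [Finset.mem_image] at h
    obtain ⟨⟨i', j', t'⟩, hmem, heq⟩ := h
    have hij' : i' < j' := by simpa [E] using hmem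
    cases t'
    · simp only [F] at heq
      obtain ⟨h1, h2, h3, h4⟩ := sv_inj hij' hij (ab_snd_ne _ _ _)
        (neg_ne_zero.mpr (ab_snd_ne _ _ _)) hs ht heq
      subst h1; subst h2
      right; exact ⟨h3.symm, h4.symm⟩
    · simp only [F] at heq
      obtain ⟨h1, h2, h3, h4⟩ := sv_inj hij' hij (ab_fst_ne _ _ _) (ab_fst_ne _ _ _) hs ht heq
      subst h1; subst h2
      left; exact ⟨h3.symm, h4.symm⟩
  · rintro (⟨hs1, ht1⟩ | ⟨hs2, ht2⟩)
    · rw [Finset.mem_image]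
      refine ⟨(i, j, true), by simp [E, hij], ?_⟩
      simp only [F]; rw [hs1, ht1]
    · rw [Finset.mem_image]
      refine ⟨(i, j, false), by simp [E, hij], ?_⟩
      simp only [F]; rw [hs2, ht2]

lemma half_prop (n : ℕ) : ∀ v ∈ rootsD n, (v ∈ (E n).image (F n) ↔ -v ∉ (E n).image (F n)) := by
  rintro v ⟨i, j, hij, hc⟩
  have key : ∀ s t : ℝ, (s = 1 ∨ s = -1) → (t = 1 ∨ t = -1) →
      (sv i j s t ∈ (E n).image (F n) ↔ -(sv i j s t) ∉ (E n).image (F n)) := by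
    intro s t hs ht
    have hs0 : s ≠ 0 := by rcases hs with rfl | rfl <;> norm_num
    have ht0 : t ≠ 0 := by rcases ht with rfl | rfl <;> norm_num
    rw [sv_neg, mem_S_iff n i j hij s t hs0 ht0,
      mem_S_iff n i j hij (-s) (-t) (neg_ne_zero.mpr hs0) (neg_ne_zero.mpr ht0)]
    rcases ab_fst n ↑i ↑j with ha | ha <;> rcases ab_snd n ↑i ↑j with hb | hb <;>
      rcases hs with rfl | rfl <;> rcases ht with rfl | rfl <;> rw [ha, hb] <;> norm_num
  rcases hc with h | h | h | h
  · rw [h, sv_one_one]; exact key 1 1 (Or.inl rfl) (Or.inl rfl)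
  · rw [h, sv_one_negone]; exact key 1 (-1) (Or.inl rfl) (Or.inr rfl)
  · rw [h, show -(Pi.single i (1:ℝ) + Pi.single j 1) = sv i j (-1) (-1) by
      rw [sv_one_one, sv_neg]]
    exact key (-1) (-1) (Or.inr rfl) (Or.inr rfl)
  · rw [h, show -(Pi.single i (1:ℝ) - Pi.single j 1) = sv i j (-1) 1 by
      rw [sv_one_negone, sv_neg]; norm_num]
    exact key (-1) 1 (Or.inr rfl) (Or.inl rfl)

lemma sigma_eA (n : ℕ) (i j : Fin n) :
    ∑ k : Fin n, ((Pi.single i 1 : Fin n → ℝ) + (Pi.single j 1 : Fin n → ℝ)) k = 2 := by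
  simp only [Pi.add_apply]
  rw [Finset.sum_add_distrib, Finset.sum_pi_single', Finset.sum_pi_single']
  simp; norm_num

lemma necessity (n : ℕ) (hn : 2 ≤ n) (S : Finset (Fin n → ℝ))
    (hS1 : ∀ v ∈ S, v ∈ rootsD n) (hS2 : ∀ v ∈ rootsD n, (v ∈ S ↔ -v ∉ S))
    (hS3 : ∑ v ∈ S, v = 0) : n % 4 = 0 ∨ n % 4 = 1 := by
  classical
  set σ : (Fin n → ℝ) → ℝ := fun v => ∑ k, v k with hσdef
  have hσ0 : ∑ v ∈ S, σ v = 0 := by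
    have h1 : σ (∑ v ∈ S, v) = ∑ v ∈ S, σ v := by
      simp only [hσdef, Finset.sum_apply]
      exact Finset.sum_comm
    rw [← h1, hS3]
    simp [hσdef]
  set eA : Fin n × Fin n → (Fin n → ℝ) :=
    fun p => Pi.single p.1 (1:ℝ) + Pi.single p.2 1 with heA
  set P : Finset (Fin n × Fin n) := Finset.univ.filter (fun p => p.1 < p.2) with hP
  set ψ : Fin n × Fin n → (Fin n → ℝ) := fun p => if eA p ∈ S then eA p else -eA p with hψ
  have hroot : ∀ p ∈ P, eA p ∈ rootsD n := by
    rintro ⟨i, j⟩ hp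
    exact ⟨i, j, by simpa [hP] using hp, Or.inl rfl⟩
  have hψS : ∀ p ∈ P, ψ p ∈ S := by
    intro p hp
    simp only [hψ]
    split_ifs with h
    · exact h
    · have := hS2 (eA p) (hroot p hp)
      by_contra hc
      exact h (this.mpr hc)
  have hσψ : ∀ p ∈ P, σ (ψ p) = if eA p ∈ S then 2 else -2 := by
    rintro ⟨i, j⟩ hp
    simp only [hψ]
    split_ifs with h
    · exact sigma_eA n i j
    · show ∑ k : Fin n, (-(eA (i,j))) k = -2
      have : ∑ k : Fin n, (-(eA (i,j))) k = -∑ k : Fin n, eA (i,j) k := by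
        simp [Finset.sum_neg_distrib]
      rw [this, sigma_eA n i j]
  have hinj : ∀ p ∈ P, ∀ q ∈ P, ψ p = ψ q → p = q := by
    rintro ⟨i, j⟩ hp ⟨i', j'⟩ hq heq
    have hij : i < j := by simpa [hP] using hp
    have hij' : i' < j' := by simpa [hP] using hq
    have h1 : ψ (i, j) = sv i j 1 1 ∨ ψ (i, j) = sv i j (-1) (-1) := by
      simp only [hψ]
      split_ifs
      · left; simp only [heA]; rw [sv_one_one]
      · right; simp only [heA]; rw [sv_one_one, sv_neg]
    have h2 : ψ (i', j') = sv i' j' 1 1 ∨ ψ (i', j') = sv i' j' (-1) (-1) := by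
      simp only [hψ]
      split_ifs
      · left; simp only [heA]; rw [sv_one_one]
      · right; simp only [heA]; rw [sv_one_one, sv_neg]
    rcases h1 with h1 | h1 <;> rcases h2 with h2 | h2 <;>
      rw [h1, h2] at heq <;>
      · obtain ⟨e1, e2, _, _⟩ := sv_inj hij hij' (by norm_num) (by norm_num)
          (by norm_num) (by norm_num) heq
        rw [Prod.ext_iff]; exact ⟨e1, e2⟩
  have hfilter : S.filter (fun v => σ v ≠ 0) = P.image ψ := by
    apply Finset.ext
    intro v
    constructor
    · intro hv
      rw [Finset.mem_filter] at hv
      obtain ⟨hvS, hvne⟩ := hv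
      obtain ⟨i, j, hij, hc⟩ := hS1 v hvS
      rw [Finset.mem_image]
      rcases hc with h | h | h | h
      · refine ⟨(i, j), by simp [hP, hij], ?_⟩
        simp only [hψ, heA]
        rw [if_pos (by rw [← h]; exact hvS), ← h]
      · exfalso
        apply hvne
        simp only [hσdef, h, Pi.sub_apply]
        rw [Finset.sum_sub_distrib, Finset.sum_pi_single', Finset.sum_pi_single']
        simp
      · refine ⟨(i, j), by simp [hP, hij], ?_⟩
        simp only [hψ, heA]
        have hnv : -(Pi.single i (1:ℝ) + Pi.single j 1) ∈ S := h ▸ hvS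
        have : (Pi.single i (1:ℝ) + Pi.single j 1) ∉ S := by
          have hiff := hS2 _ (show ((Pi.single i 1 : Fin n → ℝ) + Pi.single j 1) ∈ rootsD n from
            ⟨i, j, hij, Or.inl rfl⟩)
          intro hc
          exact (hiff.mp hc) hnv
        rw [if_neg this, ← h]
      · exfalso
        apply hvne
        simp only [hσdef, h, Pi.neg_apply, Pi.sub_apply, neg_sub]
        rw [Finset.sum_sub_distrib, Finset.sum_pi_single', Finset.sum_pi_single']
        simp
    · intro hv
      rw [Finset.mem_image] at hv
      obtain ⟨p, hp, hpv⟩ := hv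
      rw [Finset.mem_filter]
      refine ⟨hpv ▸ hψS p hp, ?_⟩
      rw [← hpv, hσψ p hp]
      split_ifs <;> norm_num
  have hsum2 : ∑ p ∈ P, (if eA p ∈ S then (2:ℝ) else -2) = 0 := by
    rw [← Finset.sum_congr rfl hσψ, ← Finset.sum_image hinj, ← hfilter,
      Finset.sum_filter_ne_zero]
    exact hσ0
  -- count
  set c1 := (P.filter (fun p => eA p ∈ S)).card with hc1
  set c2 := (P.filter (fun p => ¬ (eA p ∈ S))).card with hc2
  have hsplit : ∑ p ∈ P, (if eA p ∈ S then (2:ℝ) else -2) = 2 * c1 - 2 * c2 := by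
    rw [Finset.sum_ite, Finset.sum_const, Finset.sum_const]
    simp [hc1, hc2]
    ring
  have hcards : c1 + c2 = P.card := Finset.card_filter_add_card_filter_not _
  have hc12 : c1 = c2 := by
    rw [hsplit] at hsum2
    have : (c1:ℝ) = (c2:ℝ) := by linarith
    exact_mod_cast this
  -- P.card
  have hPcard : 2 * P.card = n * (n - 1) := by
    have h1 : P.card = ∑ i ∈ Finset.range n, (n - (i+1)) := by
      rw [hP, Finset.card_filter, Fintype.sum_prod_type]
      simp only [Fin.lt_def]
      rw [Fin.sum_univ_eq_sum_range (fun i => ∑ j : Fin n, if i < (j:ℕ) then 1 else 0) n]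
      apply Finset.sum_congr rfl
      intro i _
      rw [Fin.sum_univ_eq_sum_range (fun j => if i < j then 1 else 0) n]
      rw [← Finset.sum_filter]
      have : (Finset.range n).filter (fun j => i < j) = Finset.Ico (i+1) n := by
        ext x; simp; omega
      rw [this]
      simp [Nat.card_Ico]
    have h2 : ∑ i ∈ Finset.range n, (n - (i+1)) = ∑ i ∈ Finset.range n, i := by
      rw [← Finset.sum_range_reflect (fun i => i) n]
      apply Finset.sum_congr rfl
      intro i hi
      simp at hi
      omega
    rw [h1, h2, mul_comm]
    exact Finset.sum_range_id_mul_two n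
  have hmod : (n * (n-1)) % 4 = 0 := by omega
  rw [Nat.mul_mod] at hmod
  have hcase : n % 4 = 0 ∨ n % 4 = 1 ∨ n % 4 = 2 ∨ n % 4 = 3 := by omega
  rcases hcase with h | h | h | h
  · exact Or.inl h
  · exact Or.inr h
  · exfalso
    have h' : (n-1) % 4 = 1 := by omega
    rw [h, h'] at hmod
    norm_num at hmod
  · exfalso
    have h' : (n-1) % 4 = 2 := by omega
    rw [h, h'] at hmod
    norm_num at hmod

/-- There exists a half of `D_n` (one root from each antipodal pair) summing to
zero iff `n ≡ 0, 1 (mod 4)`. -/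
theorem stmt_3 (n : ℕ) (hn : 2 ≤ n) :
    (∃ S : Finset (Fin n → ℝ),
      (∀ v ∈ S, v ∈ rootsD n) ∧
      (∀ v ∈ rootsD n, (v ∈ S ↔ -v ∉ S)) ∧
      ∑ v ∈ S, v = 0) ↔ (n % 4 = 0 ∨ n % 4 = 1) := by
  constructor
  · rintro ⟨S, hS1, hS2, hS3⟩
    exact necessity n hn S hS1 hS2 hS3
  · intro h4
    refine ⟨(E n).image (F n), ?_, half_prop n, ?_⟩
    · intro v hv
      rw [Finset.mem_image] at hv
      obtain ⟨x, hx, rfl⟩ := hv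
      exact F_mem_roots n x hx
    · rw [Finset.sum_image (F_injOn n)]
      exact sum_F n h4
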